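/- arXiv:2305.01304 — 2 statements merged into one kernel-verified Lean document; each statement's English description precedes it below -/
import Mathlib

section
/- Let A_1, …, A_N and B be abelian groups, let A := A_1 × ⋯ × A_N, and let f : A → B. For 1 ≤ j ≤ N say fdeg_j(f) ≤ d (d ∈ ℕ) if Δ_{a_1}⋯Δ_{a_{d+1}} f = 0 for all a_1, …, a_{d+1} lying in the j-th factor A_j (embedded in A with zeros in the other coordinates). Then: (i) for every d ∈ ℕ and every 1 ≤ j ≤ N, if fdeg(f) ≤ d then fdeg_j(f) ≤ d; and (ii) if d_1, …, d_N ∈ ℕ satisfy fdeg_j(f) ≤ d_j for every 1 ≤ j ≤ N, then fdeg(f) ≤ d_1 + ⋯ + d_N. -/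
/-- The difference operator `Δ_a` sending `f` to `x ↦ f (x + a) - f x`. -/
def disc {A B : Type*} [AddCommGroup A] [AddCommGroup B] (a : A) (f : A → B) : A → B :=
  fun x => f (x + a) - f x

/-- Iterated difference operator `Δ_{a_1} ⋯ Δ_{a_k} f` along a list `[a_1, …, a_k]`. -/
def multiDisc {A B : Type*} [AddCommGroup A] [AddCommGroup B] : List A → (A → B) → (A → B)
  | [], f => f
  | a :: l, f => disc a (multiDisc l f)

/-- `FdegLE f d` says that the functional degree of `f` is at most `d`, i.e. all
`(d+1)`-fold iterated differences of `f` vanish. -/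
def FdegLE {A B : Type*} [AddCommGroup A] [AddCommGroup B] (f : A → B) (d : ℕ) : Prop :=
  ∀ l : List A, l.length = d + 1 → multiDisc l f = 0

/-- `FdegJLE A j f d` says the `j`-th partial functional degree of
`f : A_1 × ⋯ × A_N → B` is at most `d`: all `(d+1)`-fold iterated differences of `f`
with increments from the `j`-th factor (embedded with zeros elsewhere) vanish. -/
def FdegJLE {N : ℕ} (A : Fin N → Type*) [∀ i, AddCommGroup (A i)]
    {B : Type*} [AddCommGroup B] (j : Fin N) (f : (∀ i, A i) → B) (d : ℕ) : Prop :=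
  ∀ l : List (A j), l.length = d + 1 →
    multiDisc (l.map fun a => Pi.single j a) f = 0

/-! Part (i) is a specialisation. For (ii): if all `(d₁+1)`-fold differences with increments
in `s` vanish, and all `(d₂+1)`-fold ones with increments in `t`, then so do all
`(d₁+d₂+1)`-fold ones with increments in `s + t`, because `Δ_{u+v} = Δ_u + Δ_v + Δ_u Δ_v`;
and `A` is the sum `A_1 + ⋯ + A_N` of its coordinate subgroups. -/

open Pointwise

section FdegLEOn

variable {A B : Type*} [AddCommGroup A] [AddCommGroup B]

lemma disc_comm (a b : A) (f : A → B) : disc a (disc b f) = disc b (disc a f) := by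
  funext x
  simp only [disc, add_right_comm x a b]
  abel

lemma disc_zero (f : A → B) : disc 0 f = 0 := by
  funext x
  simp [disc]

lemma disc_add (u v : A) (f : A → B) :
    disc (u + v) f = disc u f + disc v f + disc u (disc v f) := by
  funext x
  simp only [disc, Pi.add_apply, ← add_assoc, add_right_comm x u v]
  abel

lemma multiDisc_zero (l : List A) : multiDisc l (0 : A → B) = 0 := by
  induction l with
  | nil => rfl
  | cons a l ih =>
    funext x
    simp [multiDisc, disc, ih]

lemma multiDisc_append (l₁ l₂ : List A) (f : A → B) :
    multiDisc (l₁ ++ l₂) f = multiDisc l₁ (multiDisc l₂ f) := by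
  induction l₁ with
  | nil => rfl
  | cons a l ih => simp only [List.cons_append, multiDisc, ih]

lemma multiDisc_perm {l l' : List A} (h : l.Perm l') (f : A → B) :
    multiDisc l f = multiDisc l' f := by
  induction h with
  | nil => rfl
  | cons a _ ih => simp only [multiDisc, ih]
  | swap a b l => exact disc_comm b a _
  | trans _ _ ih₁ ih₂ => exact ih₁.trans ih₂

lemma multiDisc_comm (l l' : List A) (f : A → B) :
    multiDisc l (multiDisc l' f) = multiDisc l' (multiDisc l f) := by
  rw [← multiDisc_append, multiDisc_perm List.perm_append_comm, multiDisc_append]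

def FdegLEOn (s : Set A) (f : A → B) (d : ℕ) : Prop :=
  ∀ l : List A, (∀ a ∈ l, a ∈ s) → l.length = d + 1 → multiDisc l f = 0

lemma FdegLEOn.fdegLE {f : A → B} {d : ℕ} (h : FdegLEOn Set.univ f d) : FdegLE f d :=
  fun l => h l fun _ _ => Set.mem_univ _

lemma FdegLEOn.multiDisc_eq_zero {s : Set A} {f : A → B} {d : ℕ} (h : FdegLEOn s f d)
    {l : List A} (hl : ∀ a ∈ l, a ∈ s) (hlen : d < l.length) : multiDisc l f = 0 := by
  have htake : multiDisc (l.take (d + 1)) f = 0 :=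
    h _ (fun a ha => hl a (List.mem_of_mem_take ha)) (by simp; omega)
  rw [← List.take_append_drop (d + 1) l, multiDisc_append, multiDisc_comm, htake,
    multiDisc_zero]

lemma fdegLEOn_zero (f : A → B) : FdegLEOn 0 f 0 := by
  intro l hl hlen
  obtain ⟨a, rfl⟩ := List.length_eq_one_iff.mp hlen
  obtain rfl : a = 0 := hl a List.mem_cons_self
  exact disc_zero _

/- Expand each `Δ_{u+v}` of `l` as `Δ_u + Δ_v + Δ_u Δ_v`; the increments split off so far
are collected in `l₁ ⊆ s` and `l₂ ⊆ t`, and each fully expanded term has more than `d₁` of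
them in `s` or more than `d₂` in `t`. -/
lemma FdegLEOn.multiDisc_append_eq_zero {s t : Set A} {f : A → B} {d₁ d₂ : ℕ}
    (hs : FdegLEOn s f d₁) (ht : FdegLEOn t f d₂) {l : List A} (hl : ∀ a ∈ l, a ∈ s + t) :
    ∀ l₁ l₂ : List A, (∀ a ∈ l₁, a ∈ s) → (∀ a ∈ l₂, a ∈ t) →
      d₁ + d₂ < l₁.length + l₂.length + l.length →
      multiDisc (l₁ ++ l₂ ++ l) f = 0 := by
  induction l with
  | nil =>
    intro l₁ l₂ hl₁ hl₂ hlen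
    rw [List.append_nil, multiDisc_append]
    rcases lt_or_ge d₁ l₁.length with h₁ | h₁
    · rw [multiDisc_comm, hs.multiDisc_eq_zero hl₁ h₁, multiDisc_zero]
    · rw [ht.multiDisc_eq_zero hl₂ (by simp at hlen; omega), multiDisc_zero]
  | cons a l ih =>
    intro l₁ l₂ hl₁ hl₂ hlen
    obtain ⟨u, hu, v, hv, rfl⟩ := hl a List.mem_cons_self
    have ih' := ih fun b hb => hl b (List.mem_cons_of_mem _ hb)
    simp only [List.length_cons] at hlen
    have hu₁ : ∀ b ∈ u :: l₁, b ∈ s := by simpa [hu] using hl₁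
    have hv₂ : ∀ b ∈ v :: l₂, b ∈ t := by simpa [hv] using hl₂
    have hv_disc :
        multiDisc (l₁ ++ v :: l₂ ++ l) f = disc v (multiDisc (l₁ ++ l₂ ++ l) f) := by
      rw [List.append_assoc, List.cons_append, multiDisc_perm List.perm_middle,
        ← List.append_assoc]
      rfl
    have hdu : disc u (multiDisc (l₁ ++ l₂ ++ l) f) = 0 := ih' _ _ hu₁ hl₂ (by simp; omega)
    have hdv : disc v (multiDisc (l₁ ++ l₂ ++ l) f) = 0 := by
      rw [← hv_disc]; exact ih' _ _ hl₁ hv₂ (by simp; omega)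
    have hduv : disc u (disc v (multiDisc (l₁ ++ l₂ ++ l) f)) = 0 := by
      rw [← hv_disc]; exact ih' _ _ hu₁ hv₂ (by simp; omega)
    rw [multiDisc_perm List.perm_middle, multiDisc, disc_add, hduv, hdu, hdv, add_zero, add_zero]

lemma FdegLEOn.add {s t : Set A} {f : A → B} {d₁ d₂ : ℕ} (hs : FdegLEOn s f d₁)
    (ht : FdegLEOn t f d₂) : FdegLEOn (s + t) f (d₁ + d₂) := fun l hl hlen =>
  hs.multiDisc_append_eq_zero ht hl [] [] (by simp) (by simp) (by simp [hlen])

lemma FdegLEOn.finsetSum {ι : Type*} {T : Finset ι} {s : ι → Set A} {f : A → B}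
    {d : ι → ℕ} (h : ∀ j ∈ T, FdegLEOn (s j) f (d j)) :
    FdegLEOn (∑ j ∈ T, s j) f (∑ j ∈ T, d j) := by
  classical
  induction T using Finset.induction_on with
  | empty => exact fdegLEOn_zero f
  | insert j T hj ih =>
    rw [Finset.sum_insert hj, Finset.sum_insert hj]
    exact (h j (Finset.mem_insert_self j T)).add
      (ih fun i hi => h i (Finset.mem_insert_of_mem hi))

end FdegLEOn

lemma FdegJLE.fdegLEOn_range {N : ℕ} {A : Fin N → Type*} [∀ i, AddCommGroup (A i)]
    {B : Type*} [AddCommGroup B] {j : Fin N} {f : (∀ i, A i) → B} {d : ℕ}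
    (h : FdegJLE A j f d) : FdegLEOn (Set.range (Pi.single j)) f d := by
  intro l hl hlen
  obtain ⟨l', rfl⟩ : l ∈ Set.range (List.map (Pi.single j)) := by
    rw [Set.range_list_map]; exact hl
  exact h l' (by simpa using hlen)

lemma sum_range_single_eq_univ {ι : Type*} [Fintype ι] [DecidableEq ι] {A : ι → Type*}
    [∀ i, AddCommGroup (A i)] : ∑ j, Set.range (Pi.single j : A j → ∀ i, A i) = Set.univ :=
  Set.eq_univ_of_forall fun a => (Set.mem_fintype_sum _ _).2
    ⟨fun j => Pi.single j (a j), fun _ => Set.mem_range_self _, Finset.univ_sum_single a⟩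

theorem partial_functional_degree_general
    (N : ℕ) (A : Fin N → Type*) [∀ i, AddCommGroup (A i)]
    {B : Type*} [AddCommGroup B] (f : (∀ i, A i) → B) :
    (∀ (d : ℕ) (j : Fin N), FdegLE f d → FdegJLE A j f d) ∧
    (∀ d : Fin N → ℕ, (∀ j : Fin N, FdegJLE A j f (d j)) → FdegLE f (∑ j, d j)) := by
  refine ⟨fun d j hf l hlen => hf _ (by simpa using hlen), fun d hd => ?_⟩
  have hsum := FdegLEOn.finsetSum (T := Finset.univ) fun j _ => (hd j).fdegLEOn_range
  rw [sum_range_single_eq_univ] at hsum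
  exact hsum.fdegLE

/-- **Partial functional degrees.** For `f : A_1 × ⋯ × A_N → B`:
(i) `fdeg_j(f) ≤ fdeg(f)` for each `j`, and
(ii) if `fdeg_j(f) ≤ d_j` for all `j` then `fdeg(f) ≤ d_1 + ⋯ + d_N`. -/
theorem partial_functional_degree
    (N : ℕ) (hN : 1 ≤ N) (A : Fin N → Type*) [∀ i, AddCommGroup (A i)]
    {B : Type*} [AddCommGroup B] (f : (∀ i, A i) → B) :
    (∀ (d : ℕ) (j : Fin N), FdegLE f d → FdegJLE A j f d) ∧
    (∀ d : Fin N → ℕ, (∀ j : Fin N, FdegJLE A j f (d j)) → FdegLE f (∑ j, d j)) :=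
  partial_functional_degree_general N A f
end

section
/- Let N ≥ 1 and let h : ℚ^N → ℚ be a function of finite functional degree (i.e., fdeg(h) ≤ d for some d ∈ ℕ, with respect to the additive group structures). If h(x) = 0 for every x ∈ ℤ^N ⊆ ℚ^N, then h = 0. -/
open Polynomial fwdDiff

lemma multiDisc_replicate {A B : Type*} [AddCommGroup A] [AddCommGroup B]
    (k : ℕ) (a : A) (f : A → B) :
    multiDisc (List.replicate k a) f = (Δ_[a])^[k] f := by
  induction k with
  | zero => rfl
  | succ k ih => rw [List.replicate_succ, multiDisc, ih, Function.iterate_succ_apply']; rfl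

lemma FdegLE.fwdDiff_iter_eq_zero {A B : Type*} [AddCommGroup A] [AddCommGroup B]
    {f : A → B} {d : ℕ} (hf : FdegLE f d) (a : A) : (Δ_[a])^[d + 1] f = 0 := by
  rw [← multiDisc_replicate]
  exact hf _ (List.length_replicate ..)

section Newton

variable {M K : Type*} [AddCommMonoid M]

lemma fwdDiff_iter_eq_zero_of_le [AddCommGroup K] {a : M} {f : M → K} {d k : ℕ}
    (hf : (Δ_[a])^[d] f = 0) (hdk : d ≤ k) : (Δ_[a])^[k] f = 0 := by
  obtain ⟨j, rfl⟩ := Nat.exists_eq_add_of_le' hdk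
  rw [Function.iterate_add_apply, hf]
  exact Function.iterate_fixed (fwdDiff_const a 0) j

variable [Field K] [CharZero K]

lemma exists_polynomial_eval_eq_of_fwdDiff_iter_eq_zero {a : M} {f : M → K} {d : ℕ}
    (hf : (Δ_[a])^[d + 1] f = 0) (y : M) :
    ∃ P : K[X], ∀ n : ℕ, f (y + n • a) = P.eval (n : K) := by
  refine ⟨∑ k ∈ Finset.range (d + 1), C ((Δ_[a])^[k] f y / k.factorial) * descPochhammer K k,
    fun n => ?_⟩
  set g : ℕ → K := fun k => n.choose k * (Δ_[a])^[k] f y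
  have hsub : ∀ e, e ≤ max n d → (∀ k, e < k → g k = 0) →
      ∑ k ∈ Finset.range (e + 1), g k = ∑ k ∈ Finset.range (max n d + 1), g k := fun e he hge =>
    Finset.sum_subset (Finset.range_subset_range.2 (Nat.succ_le_succ he)) fun k _ hke =>
      hge k (by simpa using hke)
  calc f (y + n • a) = ∑ k ∈ Finset.range (n + 1), g k := by
        simp [shift_eq_sum_fwdDiff_iter, g, nsmul_eq_mul]
    _ = ∑ k ∈ Finset.range (d + 1), g k := by
        rw [hsub n (le_max_left ..) fun k hk => by simp [g, Nat.choose_eq_zero_of_lt hk],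
          hsub d (le_max_right ..) fun k hk => by simp [g, fwdDiff_iter_eq_zero_of_le hf hk]]
    _ = _ := by
        simp only [eval_finsetSum, eval_mul, eval_C, g, Nat.cast_choose_eq_descPochhammer_div]
        exact Finset.sum_congr rfl fun k _ => by ring

lemma eq_zero_of_fwdDiff_iter_eq_zero_of_infinite {a : M} {f : M → K} {d : ℕ}
    (hf : (Δ_[a])^[d + 1] f = 0) (y : M) (hinf : {n : ℕ | f (y + n • a) = 0}.Infinite) (n : ℕ) :
    f (y + n • a) = 0 := by
  obtain ⟨P, hP⟩ := exists_polynomial_eval_eq_of_fwdDiff_iter_eq_zero hf y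
  have hroots : Nat.cast '' {n : ℕ | f (y + n • a) = 0} ⊆ {r : K | P.IsRoot r} := by
    rintro _ ⟨k, hk, rfl⟩
    simpa [hP] using hk
  have hP0 : P = 0 := P.eq_zero_of_infinite_isRoot
    ((hinf.image Nat.cast_injective.injOn).mono hroots)
  rw [hP, hP0, eval_zero]

end Newton

lemma exists_pos_nsmul_eq_intCast {ι : Type*} [Fintype ι] (x : ι → ℚ) :
    ∃ m : ℕ, 0 < m ∧ ∃ z : ι → ℤ, m • x = fun i => (z i : ℚ) := by
  set m := ∏ i, (x i).den
  refine ⟨m, Finset.prod_pos fun i _ => (x i).den_pos,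
    fun i => (x i).num * (m / (x i).den : ℕ), funext fun i => ?_⟩
  have hdvd : (x i).den ∣ m := Finset.dvd_prod_of_mem _ (Finset.mem_univ i)
  have hden : ((x i).den : ℚ) ≠ 0 := by exact_mod_cast (x i).den_nz
  rw [Pi.smul_apply, nsmul_eq_mul, Int.cast_mul, Int.cast_natCast, Nat.cast_div hdvd hden,
    ← Rat.mul_den_eq_num]
  field_simp

theorem eq_zero_of_finite_fdeg_of_vanishing_on_int_general
    (N : ℕ) (h : (Fin N → ℚ) → ℚ)
    (hfin : ∃ d : ℕ, FdegLE h d)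
    (hvan : ∀ x : Fin N → ℤ, h (fun i => (x i : ℚ)) = 0) :
    h = 0 := by
  obtain ⟨d, hd⟩ := hfin
  funext x
  obtain ⟨m, hm, z, hz⟩ := exists_pos_nsmul_eq_intCast x
  have hmul : ∀ j : ℕ, h (0 + (m * j) • x) = 0 := fun j => by
    rw [zero_add, mul_nsmul, hz]
    convert hvan fun i => j * z i using 2
    ext i
    simp
  have hinf : {n : ℕ | h (0 + n • x) = 0}.Infinite :=
    (Set.infinite_range_of_injective (mul_right_injective₀ hm.ne')).mono
      (by rintro _ ⟨j, rfl⟩; exact hmul j)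
  simpa using eq_zero_of_fwdDiff_iter_eq_zero_of_infinite (hd.fwdDiff_iter_eq_zero x) 0 hinf 1

/-- If `h : ℚ^N → ℚ` has finite functional degree and vanishes on `ℤ^N`, then `h = 0`. -/
theorem eq_zero_of_finite_fdeg_of_vanishing_on_int
    (N : ℕ) (hN : 1 ≤ N) (h : (Fin N → ℚ) → ℚ)
    (hfin : ∃ d : ℕ, FdegLE h d)
    (hvan : ∀ x : Fin N → ℤ, h (fun i => (x i : ℚ)) = 0) :
    h = 0 :=
  eq_zero_of_finite_fdeg_of_vanishing_on_int_general N h hfin hvan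
end
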